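/- The product poset [2] × [2] × [2] with its minimal and maximal elements removed admits a surjective order-preserving map with connected fibers (a contraction) onto the 4-element poset with two minimal elements each below both of two maximal elements (the crown poset Ã₃). -/

import Mathlib

open Function

/-- The comparability graph of a poset. -/
def compGraph (P : Type*) [PartialOrder P] : SimpleGraph P where
  Adj x y := x ≠ y ∧ (x ≤ y ∨ y ≤ x)
  symm := ⟨fun x y h => ⟨h.1.symm, h.2.symm⟩⟩
  loopless := ⟨fun x h => h.1 rfl⟩

/-- A contraction of posets: a surjective monotone map with connected fibers. -/
def IsContraction {P Q : Type*} [PartialOrder P] [PartialOrder Q] (c : P → Q) : Prop :=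
  Monotone c ∧ Function.Surjective c ∧
    ∀ q : Q, ((compGraph P).induce (c ⁻¹' {q})).Connected

/-- An elementary contraction: exactly one fiber has two elements, all others are singletons. -/
def IsElementaryContraction {P Q : Type*} [PartialOrder P] [PartialOrder Q] (c : P → Q) : Prop :=
  IsContraction c ∧
    ∃ x : Q, (c ⁻¹' {x}).ncard = 2 ∧ ∀ r : Q, r ≠ x → (c ⁻¹' {r}).ncard = 1

/-- The crown poset `Ã₃`: two minimal elements `m₁, m₂`, each below both of the two maximal
elements `M₁, M₂`, and no other strict relations. -/
inductive Crown : Type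
  | m1 | m2 | M1 | M2
deriving DecidableEq

instance : Fintype Crown where
  elems := {.m1, .m2, .M1, .M2}
  complete := by intro x; cases x <;> decide

/-- The order on the crown, as a boolean relation. -/
def Crown.leB : Crown → Crown → Bool
  | x, y => x == y || ((x == .m1 || x == .m2) && (y == .M1 || y == .M2))

instance : PartialOrder Crown where
  le x y := Crown.leB x y = true
  le_refl := by exact (by decide : ∀ a : Crown, Crown.leB a a = true)
  le_trans := by exact (by decide :
    ∀ a b c : Crown, Crown.leB a b = true → Crown.leB b c = true → Crown.leB a c = true)
  le_antisymm := by exact (by decide :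
    ∀ a b : Crown, Crown.leB a b = true → Crown.leB b a = true → a = b)

/-!
Send the face `z = 0` of the cube, i.e. `(1,0,0)`, `(0,1,0)`, `(1,1,0)`, isomorphically onto
`m₁`, `m₂`, `M₁`, and collapse the remaining points `(0,0,1)`, `(1,0,1)`, `(0,1,1)` to `M₂`.
Every fiber has a least element, which is comparable to the whole fiber, so the fibers are
connected; monotonicity is a finite check.
-/

theorem compGraph_induce_connected_of_isLeast {P : Type*} [PartialOrder P] {S : Set P} {a : P}
    (h : IsLeast S a) : ((compGraph P).induce S).Connected := by
  rw [SimpleGraph.connected_iff_exists_forall_reachable]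
  refine ⟨⟨a, h.1⟩, fun x => ?_⟩
  by_cases hx : x = ⟨a, h.1⟩
  · rw [hx]
  · exact SimpleGraph.Adj.reachable ⟨fun hax => hx (Subtype.ext hax.symm), Or.inl (h.2 x.2)⟩

theorem isContraction_of_leftInverse {P Q : Type*} [PartialOrder P] [PartialOrder Q]
    {c : P → Q} {s : Q → P} (hc : Monotone c) (hcs : LeftInverse c s)
    (hsc : ∀ x, s (c x) ≤ x) : IsContraction c := by
  refine ⟨hc, hcs.surjective, fun q => compGraph_induce_connected_of_isLeast ⟨hcs q, ?_⟩⟩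
  rintro x rfl
  exact hsc x

instance : DecidableRel (α := Crown) (· ≤ ·) := fun a b => decEq (Crown.leB a b) true

abbrev CubeMinusBounds := {x : Fin 2 × Fin 2 × Fin 2 // x ≠ (0, 0, 0) ∧ x ≠ (1, 1, 1)}

def cubeToCrown (x : CubeMinusBounds) : Crown :=
  match x.val with
  | (1, 0, 0) => .m1
  | (0, 1, 0) => .m2
  | (1, 1, 0) => .M1
  | _ => .M2

def crownToCube : Crown → CubeMinusBounds
  | .m1 => ⟨(1, 0, 0), by decide⟩
  | .m2 => ⟨(0, 1, 0), by decide⟩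
  | .M1 => ⟨(1, 1, 0), by decide⟩
  | .M2 => ⟨(0, 0, 1), by decide⟩

theorem monotone_cubeToCrown : Monotone cubeToCrown := fun x y =>
  (by decide : ∀ x y : CubeMinusBounds, x ≤ y → cubeToCrown x ≤ cubeToCrown y) x y

theorem leftInverse_cubeToCrown_crownToCube : LeftInverse cubeToCrown crownToCube := by
  decide

theorem crownToCube_cubeToCrown_le (x : CubeMinusBounds) : crownToCube (cubeToCrown x) ≤ x := by
  revert x
  decide

/-- The poset `[2] × [2] × [2]` with its minimal and maximal elements removed admits a
contraction onto the crown poset `Ã₃`. -/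
theorem cube_minus_bounds_contracts_onto_crown :
    ∃ c : {x : Fin 2 × Fin 2 × Fin 2 // x ≠ (0, 0, 0) ∧ x ≠ (1, 1, 1)} → Crown,
      IsContraction c :=
  ⟨cubeToCrown, isContraction_of_leftInverse monotone_cubeToCrown
    leftInverse_cubeToCrown_crownToCube crownToCube_cubeToCrown_le⟩
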